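/- arXiv:1701.06926 — 2 statements merged into one kernel-verified Lean document; each statement's English description precedes it below -/
import Mathlib

section
/- Let x ∈ (0,1) and let s_n be a random variable with density proportional to y^{⌊nx⌋-1}/(1+y)^{n+1} on (0,∞). Let μ_n = ⌊nx⌋/(n-⌊nx⌋) be its mean. Then E[η(s_n/μ_n)] → 0 as n → ∞, where η(y) = y - 1 - log(y). -/
/-!
Since `log t ≥ 1 - t⁻¹`, one has `0 ≤ η t ≤ t + t⁻¹ - 2` for `t > 0`. With `k = ⌊n x⌋`, `s_n` has
the beta prime law `β'(k, n - k + 1)`, whose moments are ratios of beta integrals: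
`E s_n = k / (n - k) = μ_n` and `E s_n⁻¹ = (n - k + 1) / (k - 1)`. Hence
`0 ≤ E η(s_n / μ_n) ≤ μ_n E s_n⁻¹ - 1 = n / ((k - 1) (n - k)) = O(1 / n)`.
-/

open MeasureTheory Set Filter Topology Real
open scoped Nat

lemma pow_div_one_add_pow_le {y : ℝ} (hy : 0 ≤ y) {a c d : ℕ} (h : a + d ≤ c) :
    y ^ a / (1 + y) ^ c ≤ ((1 + y) ^ d)⁻¹ := by
  rw [div_le_iff₀ (by positivity), inv_mul_eq_div, le_div_iff₀ (by positivity)]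
  calc y ^ a * (1 + y) ^ d ≤ (1 + y) ^ a * (1 + y) ^ d := by gcongr; linarith
    _ = (1 + y) ^ (a + d) := (pow_add _ _ _).symm
    _ ≤ (1 + y) ^ c := pow_le_pow_right₀ (by linarith) h

lemma integrableOn_pow_div_one_add_pow {a c : ℕ} (h : a + 2 ≤ c) :
    IntegrableOn (fun y : ℝ => y ^ a / (1 + y) ^ c) (Ioi 0) := by
  have hmeas : Measurable fun y : ℝ => y ^ a / (1 + y) ^ c := by fun_prop
  refine integrable_inv_one_add_sq.integrableOn.mono' hmeas.aestronglyMeasurable ?_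
  filter_upwards [ae_restrict_mem measurableSet_Ioi] with y (hy : 0 < y)
  rw [Real.norm_of_nonneg (by positivity)]
  calc y ^ a / (1 + y) ^ c ≤ ((1 + y) ^ 2)⁻¹ := pow_div_one_add_pow_le hy.le h
    _ ≤ (1 + y ^ 2)⁻¹ := by gcongr; nlinarith

lemma tendsto_pow_div_one_add_pow_atTop {a c : ℕ} (h : a < c) :
    Tendsto (fun y : ℝ => y ^ a / (1 + y) ^ c) atTop (𝓝 0) := by
  have hinv : Tendsto (fun y : ℝ => ((1 + y) ^ 1)⁻¹) atTop (𝓝 0) := by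
    simpa [Function.comp_def] using
      tendsto_inv_atTop_zero.comp (tendsto_atTop_add_const_left _ 1 tendsto_id)
  refine squeeze_zero' ?_ ?_ hinv
  all_goals filter_upwards [eventually_ge_atTop 0] with y hy
  · positivity
  · exact pow_div_one_add_pow_le hy h

lemma hasDerivAt_pow_div_one_add_pow (p q : ℕ) {y : ℝ} (hy : 1 + y ≠ 0) :
    HasDerivAt (fun y : ℝ => y ^ p / (1 + y) ^ q)
      (p * y ^ (p - 1) / (1 + y) ^ q - q * (y ^ p / (1 + y) ^ (q + 1))) y := by
  refine ((hasDerivAt_pow p y).div (((hasDerivAt_id y).const_add 1).pow q)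
    (pow_ne_zero _ hy)).congr_deriv ?_
  rcases q with _ | q
  · simp
  · simp only [id, mul_one, add_tsub_cancel_right, Pi.pow_apply]
    field_simp
    ring

lemma integral_inv_one_add_pow (b : ℕ) :
    ∫ y in Ioi (0 : ℝ), ((1 + y) ^ (b + 2))⁻¹ = 1 / (b + 1) := by
  have hderiv : ∀ y ∈ Ici (0 : ℝ),
      HasDerivAt (fun y : ℝ => -(1 / (b + 1 : ℝ)) * (y ^ 0 / (1 + y) ^ (b + 1)))
        (((1 + y) ^ (b + 2))⁻¹) y := fun y (hy : 0 ≤ y) => by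
    refine ((hasDerivAt_pow_div_one_add_pow 0 (b + 1) (by positivity)).const_mul _).congr_deriv ?_
    simp only [CharP.cast_eq_zero, zero_mul, zero_div, pow_zero, zero_sub, mul_neg]
    push_cast
    field_simp
  have hlim := (tendsto_pow_div_one_add_pow_atTop (a := 0) (c := b + 1) (by omega)).const_mul
    (-(1 / (b + 1 : ℝ)))
  rw [mul_zero] at hlim
  have hint : IntegrableOn (fun y : ℝ => ((1 + y) ^ (b + 2))⁻¹) (Ioi 0) := by
    simpa using integrableOn_pow_div_one_add_pow (a := 0) (c := b + 2) (by omega)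
  rw [integral_Ioi_of_hasDerivAt_of_tendsto' hderiv hint hlim]
  simp

lemma integral_pow_div_one_add_pow (a b : ℕ) :
    ∫ y in Ioi (0 : ℝ), y ^ a / (1 + y) ^ (a + b + 2) = a ! * b ! / (a + b + 1)! := by
  induction a with
  | zero =>
    simp only [pow_zero, zero_add, one_div, integral_inv_one_add_pow, Nat.factorial_succ,
      Nat.factorial_zero]
    push_cast
    field_simp
  | succ a ih =>
    have hderiv : ∀ y ∈ Ici (0 : ℝ),
        HasDerivAt (fun y : ℝ => y ^ (a + 1) / (1 + y) ^ (a + b + 2))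
          ((a + 1) * (y ^ a / (1 + y) ^ (a + b + 2)) -
            (a + b + 2) * (y ^ (a + 1) / (1 + y) ^ (a + 1 + b + 2))) y := fun y (hy : 0 ≤ y) => by
      convert hasDerivAt_pow_div_one_add_pow (a + 1) (a + b + 2) (y := y) (by positivity) using 1
      push_cast
      ring_nf
    have h₁ := integrableOn_pow_div_one_add_pow (a := a) (c := a + b + 2) (by omega)
    have h₂ := integrableOn_pow_div_one_add_pow (a := a + 1) (c := a + 1 + b + 2) (by omega)
    have hibp := integral_Ioi_of_hasDerivAt_of_tendsto' hderiv
      ((h₁.const_mul _).sub (h₂.const_mul _))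
      (tendsto_pow_div_one_add_pow_atTop (a := a + 1) (c := a + b + 2) (by omega))
    rw [integral_sub (h₁.const_mul _) (h₂.const_mul _), integral_const_mul, integral_const_mul,
      ih] at hibp
    rw [zero_pow (Nat.succ_ne_zero a), zero_div, sub_zero] at hibp
    rw [show a + 1 + b + 1 = a + b + 1 + 1 by omega, Nat.factorial_succ (a + b + 1),
      Nat.factorial_succ a]
    have : ((a + b + 1)! : ℝ) ≠ 0 := by positivity
    push_cast
    rw [eq_div_iff (by positivity)]
    field_simp at hibp
    linear_combination -hibp

/-- The density of the beta prime distribution `β'(a + 1, b + 1)`; the shift makes the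
normalising constant `1 / B(a + 1, b + 1) = (a + b + 1)! / (a! b!)`. -/
noncomputable def betaPrimeDensity (a b : ℕ) (y : ℝ) : ℝ :=
  (a + b + 1)! / (a ! * b !) * (y ^ a / (1 + y) ^ (a + b + 2))

noncomputable def betaPrimeMeasure (a b : ℕ) : Measure ℝ :=
  (volume.restrict (Ioi 0)).withDensity fun y => ENNReal.ofReal (betaPrimeDensity a b y)

section BetaPrime

variable {a b : ℕ}

@[fun_prop]
lemma measurable_betaPrimeDensity : Measurable (betaPrimeDensity a b) := by
  unfold betaPrimeDensity; fun_prop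

lemma betaPrimeDensity_nonneg {y : ℝ} (hy : 0 ≤ y) : 0 ≤ betaPrimeDensity a b y := by
  unfold betaPrimeDensity; positivity

lemma integral_betaPrimeMeasure (g : ℝ → ℝ) :
    ∫ y, g y ∂betaPrimeMeasure a b = ∫ y in Ioi 0, betaPrimeDensity a b y * g y := by
  rw [betaPrimeMeasure, integral_withDensity_eq_integral_toReal_smul (by fun_prop)
    (ae_of_all _ fun _ => ENNReal.ofReal_lt_top)]
  refine setIntegral_congr_fun measurableSet_Ioi fun y (hy : 0 < y) => ?_
  rw [ENNReal.toReal_ofReal (betaPrimeDensity_nonneg hy.le), smul_eq_mul]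

lemma integrable_betaPrimeMeasure_iff {g : ℝ → ℝ} :
    Integrable g (betaPrimeMeasure a b) ↔
      IntegrableOn (fun y => betaPrimeDensity a b y * g y) (Ioi 0) := by
  rw [betaPrimeMeasure, integrable_withDensity_iff_integrable_smul' (by fun_prop)
    (ae_of_all _ fun _ => ENNReal.ofReal_lt_top)]
  refine integrable_congr ?_
  filter_upwards [ae_restrict_mem measurableSet_Ioi] with y (hy : 0 < y)
  rw [ENNReal.toReal_ofReal (betaPrimeDensity_nonneg hy.le), smul_eq_mul]

lemma integral_betaPrimeDensity : ∫ y in Ioi 0, betaPrimeDensity a b y = 1 := by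
  simp only [betaPrimeDensity, integral_const_mul, integral_pow_div_one_add_pow]
  field_simp

instance : IsProbabilityMeasure (betaPrimeMeasure a b) := by
  constructor
  rw [betaPrimeMeasure, withDensity_apply _ MeasurableSet.univ, Measure.restrict_univ,
    ← ofReal_integral_eq_lintegral_ofReal, integral_betaPrimeDensity, ENNReal.ofReal_one]
  · exact (integrableOn_pow_div_one_add_pow (by omega)).const_mul _
  · filter_upwards [ae_restrict_mem measurableSet_Ioi] with y (hy : 0 < y)
    exact betaPrimeDensity_nonneg hy.le

lemma ae_pos_betaPrimeMeasure : ∀ᵐ y ∂betaPrimeMeasure a b, 0 < y :=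
  (withDensity_absolutelyContinuous _ _).ae_le (ae_restrict_mem measurableSet_Ioi)

lemma betaPrimeDensity_succ_mul (y : ℝ) :
    betaPrimeDensity a (b + 1) y * y =
      (a + b + 2)! / (a ! * (b + 1)!) * (y ^ (a + 1) / (1 + y) ^ (a + 1 + b + 2)) := by
  simp only [betaPrimeDensity]
  ring_nf

lemma betaPrimeDensity_succ_mul_inv {y : ℝ} (hy : y ≠ 0) :
    betaPrimeDensity (a + 1) b y * y⁻¹ =
      (a + b + 2)! / ((a + 1)! * b !) * (y ^ a / (1 + y) ^ (a + (b + 1) + 2)) := by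
  simp only [betaPrimeDensity]
  field_simp
  ring_nf

lemma integral_id_betaPrimeMeasure (hb : 0 < b) :
    ∫ y, y ∂betaPrimeMeasure a b = (a + 1) / b := by
  obtain ⟨b, rfl⟩ := Nat.exists_eq_add_of_lt hb
  simp only [zero_add]
  rw [integral_betaPrimeMeasure]
  simp only [betaPrimeDensity_succ_mul, integral_const_mul, integral_pow_div_one_add_pow]
  rw [show a + 1 + b + 1 = a + b + 2 by omega, Nat.factorial_succ a, Nat.factorial_succ b]
  push_cast
  field_simp

lemma integrable_id_betaPrimeMeasure (hb : 0 < b) :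
    Integrable (fun y => y) (betaPrimeMeasure a b) := by
  obtain ⟨b, rfl⟩ := Nat.exists_eq_add_of_lt hb
  simp only [zero_add]
  rw [integrable_betaPrimeMeasure_iff]
  exact IntegrableOn.congr_fun
    ((integrableOn_pow_div_one_add_pow (a := a + 1) (c := a + 1 + b + 2) (by omega)).const_mul _)
    (fun y _ => (betaPrimeDensity_succ_mul y).symm) measurableSet_Ioi

lemma integrable_inv_betaPrimeMeasure (ha : 0 < a) :
    Integrable (fun y => y⁻¹) (betaPrimeMeasure a b) := by
  obtain ⟨a, rfl⟩ := Nat.exists_eq_add_of_lt ha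
  simp only [zero_add]
  rw [integrable_betaPrimeMeasure_iff]
  exact IntegrableOn.congr_fun
    ((integrableOn_pow_div_one_add_pow (a := a) (c := a + (b + 1) + 2) (by omega)).const_mul _)
    (fun y (hy : 0 < y) => (betaPrimeDensity_succ_mul_inv hy.ne').symm) measurableSet_Ioi

lemma integral_inv_betaPrimeMeasure (ha : 0 < a) :
    ∫ y, y⁻¹ ∂betaPrimeMeasure a b = (b + 1) / a := by
  obtain ⟨a, rfl⟩ := Nat.exists_eq_add_of_lt ha
  simp only [zero_add]
  rw [integral_betaPrimeMeasure, setIntegral_congr_fun measurableSet_Ioi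
    fun y (hy : 0 < y) => betaPrimeDensity_succ_mul_inv hy.ne']
  simp only [integral_const_mul, integral_pow_div_one_add_pow]
  rw [show a + (b + 1) + 1 = a + b + 2 by omega, Nat.factorial_succ a, Nat.factorial_succ b]
  push_cast
  field_simp

end BetaPrime

lemma sub_one_sub_log_nonneg {t : ℝ} (ht : 0 < t) : 0 ≤ t - 1 - log t := by
  linarith [log_le_sub_one_of_pos ht]

lemma sub_one_sub_log_le_add_inv_sub_two {t : ℝ} (ht : 0 < t) :
    t - 1 - log t ≤ t + t⁻¹ - 2 := by
  linarith [one_sub_inv_le_log_of_pos ht]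

section Integral

variable {Ω : Type*} [MeasurableSpace Ω] {P : Measure Ω} {X : Ω → ℝ}

lemma integral_sub_one_sub_log_nonneg (hX : ∀ᵐ ω ∂P, 0 < X ω) :
    0 ≤ ∫ ω, (X ω - 1 - log (X ω)) ∂P :=
  integral_nonneg_of_ae (hX.mono fun _ => sub_one_sub_log_nonneg)

lemma integral_sub_one_sub_log_le [IsProbabilityMeasure P] (hX : ∀ᵐ ω ∂P, 0 < X ω)
    (hX_int : Integrable X P) (hX_inv_int : Integrable (fun ω => (X ω)⁻¹) P) :
    ∫ ω, (X ω - 1 - log (X ω)) ∂P ≤ ∫ ω, X ω ∂P + ∫ ω, (X ω)⁻¹ ∂P - 2 := by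
  calc ∫ ω, (X ω - 1 - log (X ω)) ∂P ≤ ∫ ω, (X ω + (X ω)⁻¹ - 2) ∂P :=
        integral_mono_of_nonneg (hX.mono fun _ => sub_one_sub_log_nonneg)
          ((hX_int.add hX_inv_int).sub (integrable_const 2))
          (hX.mono fun _ => sub_one_sub_log_le_add_inv_sub_two)
    _ = ∫ ω, X ω ∂P + ∫ ω, (X ω)⁻¹ ∂P - 2 := by
      rw [integral_sub (f := fun ω => X ω + (X ω)⁻¹) (hX_int.add hX_inv_int)
          (integrable_const 2),
        integral_add hX_int hX_inv_int, integral_const, probReal_univ, one_smul]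

end Integral

lemma integral_sub_one_sub_log_div_betaPrimeMeasure_le {a b : ℕ} (ha : 0 < a) (hb : 0 < b) :
    ∫ y, (y / ((a + 1) / b) - 1 - log (y / ((a + 1) / b))) ∂betaPrimeMeasure a b ≤
      (a + b + 1) / (a * b) := by
  set m : ℝ := (a + 1) / b
  have hm : 0 < m := by positivity
  have hinv (y : ℝ) : (y / m)⁻¹ = m * y⁻¹ := by rw [inv_div, div_eq_mul_inv]
  refine (integral_sub_one_sub_log_le (ae_pos_betaPrimeMeasure.mono fun y hy => by positivity)
    ((integrable_id_betaPrimeMeasure hb).div_const m) ?_).trans_eq ?_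
  · simpa only [hinv] using (integrable_inv_betaPrimeMeasure ha).const_mul m
  · simp only [hinv, integral_div, integral_const_mul, integral_id_betaPrimeMeasure hb,
      integral_inv_betaPrimeMeasure ha, m]
    field_simp
    ring

lemma withDensity_eq_betaPrimeMeasure {n k : ℕ} (hk : 1 ≤ k) (hkn : k ≤ n) :
    (volume : Measure ℝ).withDensity (fun y => if 0 < y then ENNReal.ofReal
      ((n ! : ℝ) / ((k - 1)! * (n - k)!) * (y ^ (k - 1) / (1 + y) ^ (n + 1))) else 0) =
      betaPrimeMeasure (k - 1) (n - k) := by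
  rw [betaPrimeMeasure, ← withDensity_indicator measurableSet_Ioi]
  congr 1 with y
  simp [indicator, betaPrimeDensity, show k - 1 + (n - k) + 1 = n by omega,
    show k - 1 + (n - k) + 2 = n + 1 by omega]

lemma tendsto_div_floor_mul_sub_one_mul_sub_floor_mul {x : ℝ} (hx : x ∈ Ioo 0 1) :
    Tendsto (fun n : ℕ => (n : ℝ) / ((⌊n * x⌋₊ - 1) * (n - ⌊n * x⌋₊))) atTop (𝓝 0) := by
  have hfloor : Tendsto (fun n : ℕ => (⌊(n : ℝ) * x⌋₊ : ℝ) / n) atTop (𝓝 x) := by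
    simpa only [mul_comm x, Function.comp_def] using
      (tendsto_nat_floor_mul_div_atTop hx.1.le).comp tendsto_natCast_atTop_atTop
  have hinv := tendsto_inv_atTop_nhds_zero_nat (𝕜 := ℝ)
  have hlim := hinv.div ((hfloor.sub hinv).mul (tendsto_const_nhds.sub hfloor))
    (by simpa using ⟨hx.1.ne', (sub_pos.2 hx.2).ne'⟩)
  rw [zero_div] at hlim
  refine hlim.congr' ((eventually_ne_atTop 0).mono fun n hn => ?_)
  have hn : (n : ℝ) ≠ 0 := Nat.cast_ne_zero.2 hn
  rw [Pi.div_apply, div_sub' hn, one_sub_div hn, div_mul_div_comm, div_div_eq_mul_div,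
    inv_mul_cancel_left₀ hn, mul_inv_cancel₀ hn]

lemma integral_sub_one_sub_log_div_mem_Icc_of_map_eq {Ω : Type*} [MeasurableSpace Ω]
    {P : Measure Ω} [IsProbabilityMeasure P] {X : Ω → ℝ} {n k : ℕ} (hk : 2 ≤ k) (hkn : k < n)
    (hX : P.map X = (volume : Measure ℝ).withDensity (fun y => if 0 < y then ENNReal.ofReal
      ((n ! : ℝ) / ((k - 1)! * (n - k)!) * (y ^ (k - 1) / (1 + y) ^ (n + 1))) else 0)) :
    ∫ ω, (X ω / (k / (n - k)) - 1 - log (X ω / (k / (n - k)))) ∂P ∈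
      Icc 0 ((n : ℝ) / ((k - 1) * (n - k))) := by
  rw [withDensity_eq_betaPrimeMeasure (by omega) hkn.le] at hX
  have hmean : (k : ℝ) / (n - k) = ((k - 1 : ℕ) + 1) / (n - k : ℕ) := by
    rw [Nat.cast_sub (by omega), Nat.cast_sub hkn.le]
    ring_nf
  have hbound : (n : ℝ) / ((k - 1) * (n - k)) =
      ((k - 1 : ℕ) + (n - k : ℕ) + 1) / ((k - 1 : ℕ) * (n - k : ℕ)) := by
    rw [Nat.cast_sub (by omega), Nat.cast_sub hkn.le]
    ring_nf
  rw [hmean, hbound]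
  have ha : 0 < k - 1 := by omega
  have hb : 0 < n - k := by omega
  generalize k - 1 = a at ha hX ⊢
  generalize n - k = b at hb hX ⊢
  have hm : (0 : ℝ) < (a + 1) / b := by positivity
  rw [← integral_map (f := fun y => y / ((a + 1) / b) - 1 - log (y / ((a + 1) / b)))
    (.of_map_ne_zero (hX ▸ IsProbabilityMeasure.ne_zero _)) (by fun_prop), hX]
  exact ⟨integral_sub_one_sub_log_nonneg
      (ae_pos_betaPrimeMeasure.mono fun y hy => div_pos hy hm),
    integral_sub_one_sub_log_div_betaPrimeMeasure_le ha hb⟩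

theorem expectation_eta_tendsto_zero
    {Ω : Type*} [MeasureSpace Ω] (P : Measure Ω) [IsProbabilityMeasure P]
    (x : ℝ) (hx : x ∈ Set.Ioo (0 : ℝ) 1) (s : ℕ → Ω → ℝ)
    (hlaw : ∀ n : ℕ, 1 ≤ ⌊(n : ℝ) * x⌋₊ →
      Measure.map (s n) P = (volume : Measure ℝ).withDensity (fun y =>
        if 0 < y then ENNReal.ofReal
          ((n.factorial : ℝ) / (((⌊(n : ℝ) * x⌋₊ - 1).factorial : ℝ) *
              ((n - ⌊(n : ℝ) * x⌋₊).factorial : ℝ)) *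
            (y ^ (⌊(n : ℝ) * x⌋₊ - 1) / (1 + y) ^ (n + 1))) else 0)) :
    Filter.Tendsto
      (fun n : ℕ => ∫ ω,
        (s n ω / ((⌊(n : ℝ) * x⌋₊ : ℝ) / ((n : ℝ) - ⌊(n : ℝ) * x⌋₊)) - 1 -
          Real.log (s n ω / ((⌊(n : ℝ) * x⌋₊ : ℝ) / ((n : ℝ) - ⌊(n : ℝ) * x⌋₊)))) ∂P)
      Filter.atTop (nhds 0) := by
  have hk : ∀ᶠ n : ℕ in atTop, 2 ≤ ⌊(n : ℝ) * x⌋₊ ∧ ⌊(n : ℝ) * x⌋₊ < n := by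
    filter_upwards [(tendsto_natCast_atTop_atTop.atTop_mul_const hx.1).eventually_ge_atTop 2,
      eventually_gt_atTop 0] with n hn hn0
    refine ⟨Nat.le_floor (by exact_mod_cast hn), (Nat.floor_lt (by nlinarith [hx.1])).2 ?_⟩
    nlinarith [hx.2, (Nat.cast_pos (α := ℝ)).2 hn0]
  have hbound := hk.mono fun n hn =>
    integral_sub_one_sub_log_div_mem_Icc_of_map_eq hn.1 hn.2 (hlaw n (by omega))
  exact squeeze_zero' (hbound.mono fun _ h => h.1) (hbound.mono fun _ h => h.2)
    (tendsto_div_floor_mul_sub_one_mul_sub_floor_mul hx)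
end

section
/- Fix r > 0 and set x = r²/(1+r²), so x ∈ (0,1) and r² = x/(1-x). Suppose for each n, Y_1, …, Y_n are random variables whose CDFs are pointwise decreasing in j, and suppose that for every y ∈ (0,1), log(Y_{⌊ny⌋}) → log(y/(1-y)) in probability. Then G_n(r) := (1/n) Σ_{j=1}^n P(Y_j ≤ r²) → r²/(1+r²) as n → ∞. -/
/-!
Write `p n j = P (Y n j ≤ r²)`: it is antitone in `j ∈ [1, n]` with values in `[0, 1]`.
Since `y ↦ y / (1 - y)` is increasing and takes the value `r²` at `x = r² / (1 + r²)`,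
convergence in probability gives `p n ⌊n y⌋ → 1` for `y < x` and `p n ⌊n y⌋ → 0` for `y > x`.
By monotonicity the average `(1/n) ∑ p n j` is at least `(⌊n a⌋ / n) p n ⌊n a⌋ → a` for `a < x`
and at most `⌊n b⌋ / n + p n ⌊n b⌋ → b` for `b > x`.
-/

open MeasureTheory Filter Topology Finset

section Averages

variable {p : ℕ → ℝ} {n : ℕ}

lemma natCast_mul_le_sum_Icc_of_antitoneOn (hp : AntitoneOn p (Set.Icc 1 n))
    (hp0 : ∀ j, 0 ≤ p j) {k : ℕ} (hkn : k ≤ n) : k * p k ≤ ∑ j ∈ Icc 1 n, p j :=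
  calc (k : ℝ) * p k = ∑ _j ∈ Icc 1 k, p k := by simp
    _ ≤ ∑ j ∈ Icc 1 k, p j := sum_le_sum fun j hj => by
        rw [mem_Icc] at hj
        exact hp ⟨hj.1, hj.2.trans hkn⟩ ⟨hj.1.trans hj.2, hkn⟩ hj.2
    _ ≤ ∑ j ∈ Icc 1 n, p j :=
        sum_le_sum_of_subset_of_nonneg (Icc_subset_Icc_right hkn) fun j _ _ => hp0 j

lemma sum_Icc_le_add_mul_of_antitoneOn (hp : AntitoneOn p (Set.Icc 1 n)) (hp0 : ∀ j, 0 ≤ p j)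
    (hp1 : ∀ j, p j ≤ 1) {m : ℕ} (hm : 1 ≤ m) (hmn : m ≤ n) :
    ∑ j ∈ Icc 1 n, p j ≤ m + n * p m := by
  have hsplit : ∑ j ∈ Icc 1 n, p j = ∑ j ∈ Ioc 0 m, p j + ∑ j ∈ Ioc m n, p j :=
    (sum_Ioc_consecutive _ (Nat.zero_le m) hmn).symm
  have hhead : ∑ j ∈ Ioc 0 m, p j ≤ m := by
    simpa using sum_le_sum fun j (_ : j ∈ Ioc 0 m) => hp1 j
  have htail : ∑ j ∈ Ioc m n, p j ≤ n * p m :=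
    calc ∑ j ∈ Ioc m n, p j ≤ ∑ _j ∈ Ioc m n, p m := sum_le_sum fun j hj => by
          rw [mem_Ioc] at hj
          exact hp ⟨hm, hmn⟩ ⟨hm.trans hj.1.le, hj.2⟩ hj.1.le
      _ = (n - m : ℕ) * p m := by simp
      _ ≤ n * p m := by gcongr; exacts [hp0 m, Nat.sub_le n m]
  linarith

end Averages

lemma tendsto_natFloor_mul_div {y : ℝ} (hy : 0 ≤ y) :
    Tendsto (fun n : ℕ => (⌊(n : ℝ) * y⌋₊ : ℝ) / n) atTop (𝓝 y) := by
  simpa only [mul_comm, Function.comp_def] using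
    (tendsto_nat_floor_mul_div_atTop hy).comp tendsto_natCast_atTop_atTop

theorem tendsto_average_of_antitoneOn (p : ℕ → ℕ → ℝ) {x : ℝ} (hx : x ∈ Set.Ioo 0 1)
    (hp : ∀ n, AntitoneOn (p n) (Set.Icc 1 n)) (hp0 : ∀ n j, 0 ≤ p n j)
    (hp1 : ∀ n j, p n j ≤ 1)
    (hbelow : ∀ y ∈ Set.Ioo 0 x, Tendsto (fun n : ℕ => p n ⌊(n : ℝ) * y⌋₊) atTop (𝓝 1))
    (habove : ∀ y ∈ Set.Ioo x 1, Tendsto (fun n : ℕ => p n ⌊(n : ℝ) * y⌋₊) atTop (𝓝 0)) :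
    Tendsto (fun n : ℕ => (1 / (n : ℝ)) * ∑ j ∈ Icc 1 n, p n j) atTop (𝓝 x) := by
  have floor_mul_le {y : ℝ} (hy0 : 0 ≤ y) (hy1 : y ≤ 1) (n : ℕ) : ⌊(n : ℝ) * y⌋₊ ≤ n :=
    Nat.floor_le_of_le (mul_le_of_le_one_right n.cast_nonneg hy1)
  refine tendsto_order.2 ⟨fun a hax => ?_, fun b hxb => ?_⟩
  · obtain ⟨y, hay, hyx⟩ := exists_between (max_lt hax hx.1)
    have hy : y ∈ Set.Ioo 0 x := ⟨(le_max_right a 0).trans_lt hay, hyx⟩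
    have hlim := (tendsto_natFloor_mul_div hy.1.le).mul (hbelow y hy)
    rw [mul_one] at hlim
    filter_upwards [hlim.eventually_const_lt ((le_max_left a 0).trans_lt hay)] with n hn
    calc a < _ := hn
      _ = 1 / (n : ℝ) * (⌊(n : ℝ) * y⌋₊ * p n ⌊(n : ℝ) * y⌋₊) := by ring
      _ ≤ _ := by
        gcongr
        exact natCast_mul_le_sum_Icc_of_antitoneOn (hp n) (hp0 n)
          (floor_mul_le hy.1.le (hyx.trans hx.2).le n)
  · obtain ⟨y, hxy, hyb⟩ := exists_between (lt_min hxb hx.2)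
    have hy : y ∈ Set.Ioo x 1 := ⟨hxy, hyb.trans_le (min_le_right b 1)⟩
    have hlim := (tendsto_natFloor_mul_div (hx.1.trans hxy).le).add (habove y hy)
    rw [add_zero] at hlim
    filter_upwards [hlim.eventually_lt_const (hyb.trans_le (min_le_left b 1)),
      (tendsto_nat_floor_mul_atTop y (hx.1.trans hxy)).eventually_ge_atTop 1,
      eventually_gt_atTop 0] with n hn hm hn0
    rw [mul_comm] at hm
    calc 1 / (n : ℝ) * ∑ j ∈ Icc 1 n, p n j
        ≤ 1 / (n : ℝ) * (⌊(n : ℝ) * y⌋₊ + n * p n ⌊(n : ℝ) * y⌋₊) := by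
          gcongr
          exact sum_Icc_le_add_mul_of_antitoneOn (hp n) (hp0 n) (hp1 n) hm
            (floor_mul_le (hx.1.trans hxy).le hy.2.le n)
      _ = _ := by field_simp
      _ < b := hn

lemma Filter.Tendsto.measureReal {Ω ι : Type*} [MeasurableSpace Ω] {P : Measure Ω}
    {l : Filter ι} {s : ι → Set Ω} (h : Tendsto (fun i => P (s i)) l (𝓝 0)) :
    Tendsto (fun i => P.real (s i)) l (𝓝 0) := by
  simpa [Measure.real, Function.comp_def] using (ENNReal.tendsto_toReal ENNReal.zero_ne_top).comp h

section ConvergenceInProbability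

variable {Ω : Type*} [MeasurableSpace Ω] {P : Measure Ω} [IsProbabilityMeasure P]
  {Z : ℕ → Ω → ℝ} {c t : ℝ}

lemma tendsto_measureReal_setOf_le_one
    (hZ : ∀ ε : ℝ, 0 < ε → Tendsto (fun n => P {ω | ε < |Real.log (Z n ω) - Real.log c|})
      atTop (𝓝 0))
    (hc : 0 < c) (hct : c < t) : Tendsto (fun n => P.real {ω | Z n ω ≤ t}) atTop (𝓝 1) := by
  set ε := Real.log t - Real.log c
  have hε : 0 < ε := sub_pos.2 (Real.log_lt_log hc hct)
  have hbad := (hZ ε hε).measureReal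
  have hlower (n : ℕ) : 1 - P.real {ω | ε < |Real.log (Z n ω) - Real.log c|} ≤
      P.real {ω | Z n ω ≤ t} := by
    have hcover : Set.univ ⊆ {ω | Z n ω ≤ t} ∪ {ω | ε < |Real.log (Z n ω) - Real.log c|} := by
      intro ω _
      refine (le_or_gt (Z n ω) t).imp id fun hZt => ?_
      have := Real.log_lt_log (hc.trans hct) hZt
      exact (sub_lt_sub_right this _).trans_le (le_abs_self _)
    have := (measureReal_mono hcover).trans (measureReal_union_le (μ := P) _ _)
    rw [probReal_univ] at this
    linarith
  simpa using tendsto_of_tendsto_of_tendsto_of_le_of_le (tendsto_const_nhds.sub hbad)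
    tendsto_const_nhds hlower fun n => measureReal_le_one.trans_eq (sub_zero 1).symm

lemma tendsto_measureReal_setOf_le_zero (hpos : ∀ n ω, 0 < Z n ω)
    (hZ : ∀ ε : ℝ, 0 < ε → Tendsto (fun n => P {ω | ε < |Real.log (Z n ω) - Real.log c|})
      atTop (𝓝 0))
    (ht : 0 < t) (htc : t < c) : Tendsto (fun n => P.real {ω | Z n ω ≤ t}) atTop (𝓝 0) := by
  have hgap : 0 < Real.log c - Real.log t := sub_pos.2 (Real.log_lt_log ht htc)
  set ε := (Real.log c - Real.log t) / 2
  have hε : 0 < ε := half_pos hgap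
  have hεgap : ε < Real.log c - Real.log t := half_lt_self hgap
  have hbad := (hZ ε hε).measureReal
  refine tendsto_of_tendsto_of_tendsto_of_le_of_le tendsto_const_nhds hbad
    (fun n => measureReal_nonneg) fun n => measureReal_mono fun ω (hZt : Z n ω ≤ t) => ?_
  have := Real.log_le_log (hpos n ω) hZt
  show ε < |Real.log (Z n ω) - Real.log c|
  rw [abs_sub_comm]
  exact lt_of_lt_of_le (by linarith) (le_abs_self _)

end ConvergenceInProbability

lemma strictMonoOn_div_one_sub : StrictMonoOn (fun y : ℝ => y / (1 - y)) (Set.Iio 1) :=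
  fun y hy z hz hyz => by
    simp only [Set.mem_Iio] at hy hz
    rw [div_lt_div_iff₀ (by linarith) (by linarith)]
    nlinarith

theorem Gn_tendsto
    {Ω : Type*} [MeasureSpace Ω] (P : Measure Ω) [IsProbabilityMeasure P]
    (r : ℝ) (hr : 0 < r) (Y : ℕ → ℕ → Ω → ℝ)
    (hpos : ∀ n j ω, 0 < Y n j ω)
    (hmono : ∀ n : ℕ, ∀ t : ℝ, 0 ≤ t → ∀ j : ℕ, 1 ≤ j → j < n →
      P {ω | Y n (j + 1) ω ≤ t} ≤ P {ω | Y n j ω ≤ t})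
    (hconv : ∀ y : ℝ, y ∈ Set.Ioo (0 : ℝ) 1 → ∀ ε : ℝ, 0 < ε →
      Filter.Tendsto
        (fun n : ℕ => P {ω |
          ε < |Real.log (Y n ⌊(n : ℝ) * y⌋₊ ω) - Real.log (y / (1 - y))|})
        Filter.atTop (nhds 0)) :
    Filter.Tendsto
      (fun n : ℕ => (1 / (n : ℝ)) * ∑ j ∈ Finset.Icc 1 n, (P {ω | Y n j ω ≤ r ^ 2}).toReal)
      Filter.atTop (nhds (r ^ 2 / (1 + r ^ 2))) := by
  have hr2 : 0 < r ^ 2 := by positivity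
  have hodds : r ^ 2 / (1 + r ^ 2) / (1 - r ^ 2 / (1 + r ^ 2)) = r ^ 2 := by
    field_simp; ring
  set x := r ^ 2 / (1 + r ^ 2)
  have hx : x ∈ Set.Ioo 0 1 := ⟨by positivity, (div_lt_one (by positivity)).2 (by linarith)⟩
  have hanti (n : ℕ) : AntitoneOn (fun j => P.real {ω | Y n j ω ≤ r ^ 2}) (Set.Icc 1 n) :=
    antitoneOn_of_succ_le Set.ordConnected_Icc fun j _ hj hj1 => by
      rw [Order.succ_eq_add_one] at hj1 ⊢
      exact ENNReal.toReal_mono (measure_ne_top _ _) (hmono n _ hr2.le j hj.1 hj1.2)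
  refine tendsto_average_of_antitoneOn _ hx hanti (fun _ _ => measureReal_nonneg)
    (fun _ _ => measureReal_le_one) (fun y hy => ?_) fun y hy => ?_
  · have hy1 : y ∈ Set.Ioo 0 1 := ⟨hy.1, hy.2.trans hx.2⟩
    refine tendsto_measureReal_setOf_le_one (hconv y hy1) (div_pos hy.1 (sub_pos.2 hy1.2)) ?_
    rw [← hodds]
    exact strictMonoOn_div_one_sub hy1.2 hx.2 hy.2
  · refine tendsto_measureReal_setOf_le_zero (fun n => hpos n _)
      (hconv y ⟨hx.1.trans hy.1, hy.2⟩) hr2 ?_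
    rw [← hodds]
    exact strictMonoOn_div_one_sub hx.2 hy.2 hy.1
end
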